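/- Chopping commutes with substitution on contexts: applying a type substitution [(Φ̂ⁿ.T)/αⁿ], a term substitution [(Φ̂ⁿ.e)/u], or a simultaneous substitution [σ/Φ̂] to the lower-chop Γ⌈n of a context equals the lower-chop at n of the result of applying the substitution to Γ. -/

import Mathlib

/-! # A multi-level contextual modal lambda-calculus (Mœbius)

Syntax of types, terms, substitutions and contexts, together with the
(relationally presented) simultaneous substitution operations.
Contexts are snoc-lists: the constructor adds the *rightmost* (lowest-level)
declaration.  Erased contexts `ECx` and substitutions `MSub` follow the same
convention: the outermost constructor / list head is the rightmost entry. -/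

/-- Erased declarations: a term variable `xⁿ` or a type variable `αⁿ`. -/
inductive EDecl where
  | tm (x : ℕ) (n : ℕ)
  | ty (a : ℕ) (n : ℕ)
deriving DecidableEq

/-- Erased contexts; the list head is the rightmost (lowest-level) entry. -/
abbrev ECx := List EDecl

def EDecl.lvl : EDecl → ℕ
  | .tm _ n => n
  | .ty _ n => n

mutual
/-- Types `T ::= α[σ] | T → S | (α:(Φ ⊢ⁿ *)) → T | [Φ ⊢ⁿ T]`. -/
inductive Ty where
  | var  (a : ℕ) (σ : MSub)
  | arr  (T S : Ty)
  | pi   (a : ℕ) (n : ℕ) (Φ : Cx) (T : Ty)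
  | box  (Φ : Cx) (n : ℕ) (T : Ty)

/-- Terms `e ::= x[σ] | fn x. e | e e | Fn αⁿ. e | e (Φ̂ⁿ.T) | box(Φ̂ⁿ. e) |
let box (Φ̂ⁿ.u) = e in e`. -/
inductive Tm where
  | var    (x : ℕ) (σ : MSub)
  | lam    (x : ℕ) (e : Tm)
  | app    (e₁ e₂ : Tm)
  | tlam   (a : ℕ) (n : ℕ) (e : Tm)
  | tapp   (e : Tm) (Φ : ECx) (n : ℕ) (T : Ty)
  | box    (Φ : ECx) (n : ℕ) (e : Tm)
  | letbox (Φ : ECx) (n : ℕ) (u : ℕ) (e₁ e₂ : Tm)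

/-- Substitutions `σ ::= · | σ, (Φ̂ⁿ.e) | σ; xⁿ | σ, (Φ̂ⁿ.T) | σ; αⁿ`
(outermost constructor = rightmost entry). -/
inductive MSub where
  | nil
  | csTm (σ : MSub) (Φ : ECx) (n : ℕ) (e : Tm)
  | vrTm (σ : MSub) (x : ℕ) (n : ℕ)
  | csTy (σ : MSub) (Φ : ECx) (n : ℕ) (T : Ty)
  | vrTy (σ : MSub) (a : ℕ) (n : ℕ)

/-- Declarations: `x:(Φ ⊢ⁿ T)`, `α:(Φ ⊢ⁿ *)`, a constrained type variable
`α := (Φ̂ⁿ.T) : (Φ ⊢ⁿ *)`, or the inconsistency marker `#`. -/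
inductive Dcl where
  | tm  (x : ℕ) (Φ : Cx) (n : ℕ) (T : Ty)
  | ty  (a : ℕ) (Φ : Cx) (n : ℕ)
  | tyC (a : ℕ) (Φh : ECx) (n : ℕ) (T : Ty) (Φ : Cx)
  | hash

/-- Contexts, as snoc-lists of declarations. -/
inductive Cx where
  | nil
  | snoc (Γ : Cx) (d : Dcl)
end

def Dcl.lvl : Dcl → ℕ
  | .tm _ _ n _ => n
  | .ty _ _ n => n
  | .tyC _ _ n _ _ => n
  | .hash => 0

/-- Append of contexts: `Γ ++ Φ` puts Φ to the right. -/
def Cx.capp : Cx → Cx → Cx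
  | Γ, .nil => Γ
  | Γ, .snoc Φ d => .snoc (Cx.capp Γ Φ) d

/-- Stable merge of two sorted contexts (comparing rightmost declarations,
exactly as in the paper). -/
def Cx.merge : Cx → Cx → Cx
  | .nil, Φ => Φ
  | Ψ, .nil => Ψ
  | .snoc Ψ d, .snoc Φ d' =>
    if d'.lvl ≤ d.lvl then .snoc (Cx.merge (.snoc Ψ d) Φ) d'
    else .snoc (Cx.merge Ψ (.snoc Φ d')) d
termination_by Ψ Φ => sizeOf Ψ + sizeOf Φ

/-- Insertion of a declaration at its level position, via merge with a singleton. -/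
def Cx.ins (Γ : Cx) (d : Dcl) : Cx := Cx.merge Γ (.snoc .nil d)

/-- Lower chop `Γ⌈n`: drop all (rightmost) declarations of level < n. -/
def Cx.chopGE (n : ℕ) : Cx → Cx
  | .nil => .nil
  | .snoc Γ d => if d.lvl < n then Cx.chopGE n Γ else .snoc Γ d

/-- Upper chop `Γ⌉n`: keep the (rightmost) declarations of level < n. -/
def Cx.chopLT (n : ℕ) : Cx → Cx
  | .nil => .nil
  | .snoc Γ d => if d.lvl < n then .snoc (Cx.chopLT n Γ) d else .nil

/-- All declarations of a context have level < n (i.e. `level(Γ) ≤ n`). -/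
def Cx.allLt (n : ℕ) : Cx → Prop
  | .nil => True
  | .snoc Γ d => Cx.allLt n Γ ∧ d.lvl < n

/-- Erasure of a context. -/
def Cx.erase : Cx → ECx
  | .nil => []
  | .snoc Γ (.tm x _ n _) => .tm x n :: Cx.erase Γ
  | .snoc Γ (.ty a _ n) => .ty a n :: Cx.erase Γ
  | .snoc Γ (.tyC a _ n _ _) => .ty a n :: Cx.erase Γ
  | .snoc Γ .hash => Cx.erase Γ

/-- Append of erased contexts (`Ψ` then `Φ` to its right). -/
def ECx.capp (Ψ Φ : ECx) : ECx := Φ ++ Ψ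

/-- Lower chop of an erased context. -/
def chopE (n : ℕ) : ECx → ECx
  | [] => []
  | d :: Φ => if d.lvl < n then chopE n Φ else d :: Φ

/-- All entries of an erased context have level < n. -/
def eAllLt (n : ℕ) (Φ : ECx) : Prop := ∀ d ∈ Φ, d.lvl < n

/-- The canonical level of an erased context: least n with all entries < n. -/
def ECx.lvl (Φ : ECx) : ℕ := Φ.foldr (fun d r => max (d.lvl + 1) r) 0

/-- Insertion of an erased declaration at its level position. -/
def insE (d : EDecl) : ECx → ECx
  | [] => [d]
  | d' :: Φ => if d'.lvl < d.lvl then d' :: insE d Φ else d :: d' :: Φ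

/-- Identity substitution `id(Φ̂)`. -/
def idSub : ECx → MSub
  | [] => .nil
  | .tm x n :: Φ => .vrTm (idSub Φ) x n
  | .ty a n :: Φ => .vrTy (idSub Φ) a n

/-- Append of substitutions (`ρ`'s entries to the right of `σ`'s). -/
def MSub.sapp : MSub → MSub → MSub
  | σ, .nil => σ
  | σ, .csTm ρ Φ n e => .csTm (MSub.sapp σ ρ) Φ n e
  | σ, .vrTm ρ x n => .vrTm (MSub.sapp σ ρ) x n
  | σ, .csTy ρ Φ n T => .csTy (MSub.sapp σ ρ) Φ n T
  | σ, .vrTy ρ a n => .vrTy (MSub.sapp σ ρ) a n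

/-- Lower chop of a substitution: drop (rightmost) entries of level < n. -/
def chopSubL (n : ℕ) : MSub → MSub
  | .nil => .nil
  | .csTm σ Φ k e => if k < n then chopSubL n σ else .csTm σ Φ k e
  | .vrTm σ x k => if k < n then chopSubL n σ else .vrTm σ x k
  | .csTy σ Φ k T => if k < n then chopSubL n σ else .csTy σ Φ k T
  | .vrTy σ a k => if k < n then chopSubL n σ else .vrTy σ a k

/-- Insertion of an identity type-variable mapping `α/αⁿ` at its level position. -/
def insSubTy (a n : ℕ) : MSub → MSub
  | .nil => .vrTy .nil a n
  | .csTm σ Φ k e => if k < n then .csTm (insSubTy a n σ) Φ k e else .vrTy (.csTm σ Φ k e) a n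
  | .vrTm σ x k => if k < n then .vrTm (insSubTy a n σ) x k else .vrTy (.vrTm σ x k) a n
  | .csTy σ Φ k T => if k < n then .csTy (insSubTy a n σ) Φ k T else .vrTy (.csTy σ Φ k T) a n
  | .vrTy σ b k => if k < n then .vrTy (insSubTy a n σ) b k else .vrTy (.vrTy σ b k) a n

/-- Insertion of an identity term-variable mapping `u/uⁿ` at its level position. -/
def insSubTm (x n : ℕ) : MSub → MSub
  | .nil => .vrTm .nil x n
  | .csTm σ Φ k e => if k < n then .csTm (insSubTm x n σ) Φ k e else .vrTm (.csTm σ Φ k e) x n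
  | .vrTm σ y k => if k < n then .vrTm (insSubTm x n σ) y k else .vrTm (.vrTm σ y k) x n
  | .csTy σ Φ k T => if k < n then .csTy (insSubTm x n σ) Φ k T else .vrTm (.csTy σ Φ k T) x n
  | .vrTy σ b k => if k < n then .vrTy (insSubTm x n σ) b k else .vrTm (.vrTy σ b k) x n

/-- Result of looking up a variable in a substitution. -/
inductive LkpRes where
  | tm (Φ : ECx) (n : ℕ) (e : Tm)
  | tmVar (y : ℕ) (n : ℕ)
  | ty (Φ : ECx) (n : ℕ) (T : Ty)
  | tyVar (b : ℕ) (n : ℕ)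

/-- Lookup `lkp(σ/Ψ̂) z`, walking the substitution and its domain together. -/
def lkpSub : MSub → ECx → ℕ → Option LkpRes
  | .csTm σ Φ n e, .tm x m :: Ψ, z =>
    if z = x ∧ n = m then some (.tm Φ n e) else lkpSub σ Ψ z
  | .vrTm σ y n, .tm x m :: Ψ, z =>
    if z = x ∧ n = m then some (.tmVar y n) else lkpSub σ Ψ z
  | .csTy σ Φ n T, .ty a m :: Ψ, z =>
    if z = a ∧ n = m then some (.ty Φ n T) else lkpSub σ Ψ z
  | .vrTy σ b n, .ty a m :: Ψ, z =>
    if z = a ∧ n = m then some (.tyVar b n) else lkpSub σ Ψ z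
  | _, _, _ => none

mutual
/-- `ApTy σ Ψ m T T'` is the graph of the simultaneous substitution operation
`[σ/Ψ̂ᵐ]T = T'`, where m is the level of the domain Ψ̂. -/
inductive ApTy : MSub → ECx → ℕ → Ty → Ty → Prop where
  | varG : lkpSub σ Ψ a = none → ApSub σ Ψ m τ τ' →
      ApTy σ Ψ m (.var a τ) (.var a τ')
  | varT : lkpSub σ Ψ a = some (.ty Φ n T) → n < m → ApSub σ Ψ m τ τ' →
      ApTy τ' Φ n T T' → ApTy σ Ψ m (.var a τ) T'
  | varR : lkpSub σ Ψ a = some (.tyVar b n) → n < m → ApSub σ Ψ m τ τ' →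
      ApTy σ Ψ m (.var a τ) (.var b τ')
  | arr : ApTy σ Ψ m T T' → ApTy σ Ψ m S S' →
      ApTy σ Ψ m (.arr T S) (.arr T' S')
  | piLt : n < m → ApTy (insSubTy a n σ) (insE (.ty a n) Ψ) m T T' →
      ApTy σ Ψ m (.pi a n Φ T) (.pi a n Φ T')
  | piGe : m ≤ n → ApTy σ Ψ m T T' →
      ApTy σ Ψ m (.pi a n Φ T) (.pi a n Φ T')
  | boxGe : n ≤ m →
      ApCx (chopSubL n σ) (chopE n Ψ) m Φ Φ' →
      ApTy ((chopSubL n σ).sapp (idSub (Cx.erase Φ)))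
           (ECx.capp (chopE n Ψ) (Cx.erase Φ)) m T T' →
      ApTy σ Ψ m (.box Φ n T) (.box Φ' n T')
  | boxLt : m < n → ApTy σ Ψ m (.box Φ n T) (.box Φ n T)

/-- `ApTm σ Ψ m e e'` is the graph of `[σ/Ψ̂ᵐ]e = e'`. -/
inductive ApTm : MSub → ECx → ℕ → Tm → Tm → Prop where
  | varG : lkpSub σ Ψ x = none → ApSub σ Ψ m τ τ' →
      ApTm σ Ψ m (.var x τ) (.var x τ')
  | varE : lkpSub σ Ψ x = some (.tm Φ n e) → n < m → ApSub σ Ψ m τ τ' →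
      ApTm τ' Φ n e e' → ApTm σ Ψ m (.var x τ) e'
  | varR : lkpSub σ Ψ x = some (.tmVar y n) → n < m → ApSub σ Ψ m τ τ' →
      ApTm σ Ψ m (.var x τ) (.var y τ')
  | lam : ApTm (insSubTm x 0 σ) (insE (.tm x 0) Ψ) m e e' →
      ApTm σ Ψ m (.lam x e) (.lam x e')
  | app : ApTm σ Ψ m e₁ e₁' → ApTm σ Ψ m e₂ e₂' →
      ApTm σ Ψ m (.app e₁ e₂) (.app e₁' e₂')
  | tlamLt : n < m → ApTm (insSubTy a n σ) (insE (.ty a n) Ψ) m e e' →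
      ApTm σ Ψ m (.tlam a n e) (.tlam a n e')
  | tlamGe : m ≤ n → ApTm σ Ψ m e e' →
      ApTm σ Ψ m (.tlam a n e) (.tlam a n e')
  | tappGe : n ≤ m → ApTm σ Ψ m e e' →
      ApTy ((chopSubL n σ).sapp (idSub Φ)) (ECx.capp (chopE n Ψ) Φ) m T T' →
      ApTm σ Ψ m (.tapp e Φ n T) (.tapp e' Φ n T')
  | tappLt : m < n → ApTm σ Ψ m e e' →
      ApTm σ Ψ m (.tapp e Φ n T) (.tapp e' Φ n T)
  | boxGe : n ≤ m →
      ApTm ((chopSubL n σ).sapp (idSub Φ)) (ECx.capp (chopE n Ψ) Φ) m e e' →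
      ApTm σ Ψ m (.box Φ n e) (.box Φ n e')
  | boxLt : m < n → ApTm σ Ψ m (.box Φ n e) (.box Φ n e)
  | letboxLt : n < m → ApTm σ Ψ m e₁ e₁' →
      ApTm (insSubTm u n σ) (insE (.tm u n) Ψ) m e₂ e₂' →
      ApTm σ Ψ m (.letbox Φ n u e₁ e₂) (.letbox Φ n u e₁' e₂')
  | letboxGe : m ≤ n → ApTm σ Ψ m e₁ e₁' → ApTm σ Ψ m e₂ e₂' →
      ApTm σ Ψ m (.letbox Φ n u e₁ e₂) (.letbox Φ n u e₁' e₂')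

/-- `ApSub σ Ψ m ρ ρ'` is the graph of composition `[σ/Ψ̂ᵐ]ρ = ρ'`. -/
inductive ApSub : MSub → ECx → ℕ → MSub → MSub → Prop where
  | nil : ApSub σ Ψ m .nil .nil
  | vrTmG : lkpSub σ Ψ x = none → ApSub σ Ψ m ρ ρ' →
      ApSub σ Ψ m (.vrTm ρ x n) (.vrTm ρ' x n)
  | vrTmE : n < m → lkpSub σ Ψ x = some (.tm Φ n e) → ApSub σ Ψ m ρ ρ' →
      ApSub σ Ψ m (.vrTm ρ x n) (.csTm ρ' Φ n e)
  | vrTmR : n < m → lkpSub σ Ψ x = some (.tmVar y n) → ApSub σ Ψ m ρ ρ' →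
      ApSub σ Ψ m (.vrTm ρ x n) (.vrTm ρ' y n)
  | csTmLt : n < m → ApSub σ Ψ m ρ ρ' →
      ApTm ((chopSubL n σ).sapp (idSub Φ)) (ECx.capp (chopE n Ψ) Φ) m e e' →
      ApSub σ Ψ m (.csTm ρ Φ n e) (.csTm ρ' Φ n e')
  | csTmGe : m ≤ n → ApSub σ Ψ m ρ ρ' →
      ApSub σ Ψ m (.csTm ρ Φ n e) (.csTm ρ' Φ n e)
  | vrTyG : lkpSub σ Ψ a = none → ApSub σ Ψ m ρ ρ' →
      ApSub σ Ψ m (.vrTy ρ a n) (.vrTy ρ' a n)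
  | vrTyE : n < m → lkpSub σ Ψ a = some (.ty Φ n T) → ApSub σ Ψ m ρ ρ' →
      ApSub σ Ψ m (.vrTy ρ a n) (.csTy ρ' Φ n T)
  | vrTyR : n < m → lkpSub σ Ψ a = some (.tyVar b n) → ApSub σ Ψ m ρ ρ' →
      ApSub σ Ψ m (.vrTy ρ a n) (.vrTy ρ' b n)
  | csTyLt : n < m → ApSub σ Ψ m ρ ρ' →
      ApTy ((chopSubL n σ).sapp (idSub Φ)) (ECx.capp (chopE n Ψ) Φ) m T T' →
      ApSub σ Ψ m (.csTy ρ Φ n T) (.csTy ρ' Φ n T')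
  | csTyGe : m ≤ n → ApSub σ Ψ m ρ ρ' →
      ApSub σ Ψ m (.csTy ρ Φ n T) (.csTy ρ' Φ n T)

/-- `ApCx σ Ψ m Γ Γ'` is the graph of `[σ/Ψ̂ᵐ]Γ = Γ'` on contexts. -/
inductive ApCx : MSub → ECx → ℕ → Cx → Cx → Prop where
  | nil : ApCx σ Ψ m .nil .nil
  | ty : ApCx σ Ψ m Γ Γ' →
      ApCx σ Ψ m (.snoc Γ (.ty a Φ n)) (.snoc Γ' (.ty a Φ n))
  | tm : ApCx σ Ψ m Γ Γ' →
      ApCx (chopSubL n (σ.sapp (idSub (Cx.erase Γ))))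
           (chopE n (ECx.capp Ψ (Cx.erase Γ))) m Φ Φ' →
      ApTy ((chopSubL n (σ.sapp (idSub (Cx.erase Γ)))).sapp (idSub (Cx.erase Φ)))
           (ECx.capp (chopE n (ECx.capp Ψ (Cx.erase Γ))) (Cx.erase Φ)) m T T' →
      ApCx σ Ψ m (.snoc Γ (.tm x Φ n T)) (.snoc Γ' (.tm x Φ' n T'))
  | tyC : ApCx σ Ψ m Γ Γ' →
      ApTy ((chopSubL n (σ.sapp (idSub (Cx.erase Γ)))).sapp (idSub Φh))
           (ECx.capp (chopE n (ECx.capp Ψ (Cx.erase Γ))) Φh) m T T' →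
      ApCx σ Ψ m (.snoc Γ (.tyC a Φh n T Φ)) (.snoc Γ' (.tyC a Φh n T' Φ))
  | hash : ApCx σ Ψ m Γ Γ' →
      ApCx σ Ψ m (.snoc Γ .hash) (.snoc Γ' .hash)
end

/-- Single substitution of a contextual type `(Φ̂ⁿ.T)` for a type variable `αⁿ`,
as the simultaneous substitution with singleton domain `αⁿ` (of level n+1). -/
def ApTy1 (Φ : ECx) (n : ℕ) (T : Ty) (a : ℕ) : Ty → Ty → Prop :=
  ApTy (.csTy .nil Φ n T) [.ty a n] (n + 1)

/-- Single substitution of a contextual term `(Φ̂ⁿ.e)` for a term variable `uⁿ`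
in terms. -/
def ApTm1 (Φ : ECx) (n : ℕ) (e : Tm) (u : ℕ) : Tm → Tm → Prop :=
  ApTm (.csTm .nil Φ n e) [.tm u n] (n + 1)

/-- Single type substitution on contexts. -/
def ApCx1Ty (Φ : ECx) (n : ℕ) (T : Ty) (a : ℕ) : Cx → Cx → Prop :=
  ApCx (.csTy .nil Φ n T) [.ty a n] (n + 1)

/-- Single term substitution on contexts. -/
def ApCx1Tm (Φ : ECx) (n : ℕ) (e : Tm) (u : ℕ) : Cx → Cx → Prop :=
  ApCx (.csTm .nil Φ n e) [.tm u n] (n + 1)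

set_option maxHeartbeats 1000000 in
set_option maxRecDepth 4000 in
mutual
theorem detTy {σ Ψ m T T₁} (h : ApTy σ Ψ m T T₁) :
    ∀ {T₂}, ApTy σ Ψ m T T₂ → T₁ = T₂ := by
  intro T₂ h2
  cases h with
  | varG l hs =>
    cases h2 with
    | varG l2 hs2 => rw [detSub hs hs2]
    | varT l2 _ _ _ => rw [l] at l2; cases l2
    | varR l2 _ _ => rw [l] at l2; cases l2
  | varT l hn hs ht =>
    cases h2 with
    | varG l2 _ => rw [l] at l2; cases l2
    | varT l2 hn2 hs2 ht2 =>
        rw [l] at l2; cases l2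
        cases detSub hs hs2
        exact detTy ht ht2
    | varR l2 _ _ => rw [l] at l2; cases l2
  | varR l hn hs =>
    cases h2 with
    | varG l2 _ => rw [l] at l2; cases l2
    | varT l2 _ _ _ => rw [l] at l2; cases l2
    | varR l2 _ hs2 => rw [l] at l2; cases l2; rw [detSub hs hs2]
  | arr h1 hS =>
    cases h2 with
    | arr h1' hS' => rw [detTy h1 h1', detTy hS hS']
  | piLt hn ht =>
    cases h2 with
    | piLt hn2 ht2 => rw [detTy ht ht2]
    | piGe hn2 _ => omega
  | piGe hn ht =>
    cases h2 with
    | piLt hn2 _ => omega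
    | piGe hn2 ht2 => rw [detTy ht ht2]
  | boxGe hn hc ht =>
    cases h2 with
    | boxGe hn2 hc2 ht2 => rw [detCx hc hc2, detTy ht ht2]
    | boxLt hn2 => omega
  | boxLt hn =>
    cases h2 with
    | boxGe hn2 _ _ => omega
    | boxLt hn2 => rfl

theorem detTm {σ Ψ m e e₁} (h : ApTm σ Ψ m e e₁) :
    ∀ {e₂}, ApTm σ Ψ m e e₂ → e₁ = e₂ := by
  intro e₂ h2
  cases h with
  | varG l hs =>
    cases h2 with
    | varG l2 hs2 => rw [detSub hs hs2]
    | varE l2 _ _ _ => rw [l] at l2; cases l2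
    | varR l2 _ _ => rw [l] at l2; cases l2
  | varE l hn hs ht =>
    cases h2 with
    | varG l2 _ => rw [l] at l2; cases l2
    | varE l2 hn2 hs2 ht2 =>
        rw [l] at l2; cases l2
        cases detSub hs hs2
        exact detTm ht ht2
    | varR l2 _ _ => rw [l] at l2; cases l2
  | varR l hn hs =>
    cases h2 with
    | varG l2 _ => rw [l] at l2; cases l2
    | varE l2 _ _ _ => rw [l] at l2; cases l2
    | varR l2 _ hs2 => rw [l] at l2; cases l2; rw [detSub hs hs2]
  | lam ht =>
    cases h2 with
    | lam ht2 => rw [detTm ht ht2]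
  | app h1 hS =>
    cases h2 with
    | app h1' hS' => rw [detTm h1 h1', detTm hS hS']
  | tlamLt hn ht =>
    cases h2 with
    | tlamLt hn2 ht2 => rw [detTm ht ht2]
    | tlamGe hn2 _ => omega
  | tlamGe hn ht =>
    cases h2 with
    | tlamLt hn2 _ => omega
    | tlamGe hn2 ht2 => rw [detTm ht ht2]
  | tappGe hn he hT =>
    cases h2 with
    | tappGe hn2 he2 hT2 => rw [detTm he he2, detTy hT hT2]
    | tappLt hn2 _ => omega
  | tappLt hn he =>
    cases h2 with
    | tappGe hn2 _ _ => omega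
    | tappLt hn2 he2 => rw [detTm he he2]
  | boxGe hn he =>
    cases h2 with
    | boxGe hn2 he2 => rw [detTm he he2]
    | boxLt hn2 => omega
  | boxLt hn =>
    cases h2 with
    | boxGe hn2 _ => omega
    | boxLt hn2 => rfl
  | letboxLt hn h1 hS =>
    cases h2 with
    | letboxLt hn2 h1' hS' => rw [detTm h1 h1', detTm hS hS']
    | letboxGe hn2 _ _ => omega
  | letboxGe hn h1 hS =>
    cases h2 with
    | letboxLt hn2 _ _ => omega
    | letboxGe hn2 h1' hS' => rw [detTm h1 h1', detTm hS hS']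

theorem detSub {σ Ψ m ρ ρ₁} (h : ApSub σ Ψ m ρ ρ₁) :
    ∀ {ρ₂}, ApSub σ Ψ m ρ ρ₂ → ρ₁ = ρ₂ := by
  intro ρ₂ h2
  cases h with
  | nil => cases h2; rfl
  | vrTmG l hρ =>
    cases h2 with
    | vrTmG l2 hρ2 => rw [detSub hρ hρ2]
    | vrTmE _ l2 _ => rw [l] at l2; cases l2
    | vrTmR _ l2 _ => rw [l] at l2; cases l2
  | vrTmE hn l hρ =>
    cases h2 with
    | vrTmG l2 _ => rw [l] at l2; cases l2
    | vrTmE _ l2 hρ2 => rw [l] at l2; cases l2; rw [detSub hρ hρ2]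
    | vrTmR _ l2 _ => rw [l] at l2; cases l2
  | vrTmR hn l hρ =>
    cases h2 with
    | vrTmG l2 _ => rw [l] at l2; cases l2
    | vrTmE _ l2 _ => rw [l] at l2; cases l2
    | vrTmR _ l2 hρ2 => rw [l] at l2; cases l2; rw [detSub hρ hρ2]
  | csTmLt hn hρ he =>
    cases h2 with
    | csTmLt _ hρ2 he2 => rw [detSub hρ hρ2, detTm he he2]
    | csTmGe hn2 _ => omega
  | csTmGe hn hρ =>
    cases h2 with
    | csTmLt hn2 _ _ => omega
    | csTmGe _ hρ2 => rw [detSub hρ hρ2]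
  | vrTyG l hρ =>
    cases h2 with
    | vrTyG l2 hρ2 => rw [detSub hρ hρ2]
    | vrTyE _ l2 _ => rw [l] at l2; cases l2
    | vrTyR _ l2 _ => rw [l] at l2; cases l2
  | vrTyE hn l hρ =>
    cases h2 with
    | vrTyG l2 _ => rw [l] at l2; cases l2
    | vrTyE _ l2 hρ2 => rw [l] at l2; cases l2; rw [detSub hρ hρ2]
    | vrTyR _ l2 _ => rw [l] at l2; cases l2
  | vrTyR hn l hρ =>
    cases h2 with
    | vrTyG l2 _ => rw [l] at l2; cases l2
    | vrTyE _ l2 _ => rw [l] at l2; cases l2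
    | vrTyR _ l2 hρ2 => rw [l] at l2; cases l2; rw [detSub hρ hρ2]
  | csTyLt hn hρ hT =>
    cases h2 with
    | csTyLt _ hρ2 hT2 => rw [detSub hρ hρ2, detTy hT hT2]
    | csTyGe hn2 _ => omega
  | csTyGe hn hρ =>
    cases h2 with
    | csTyLt hn2 _ _ => omega
    | csTyGe _ hρ2 => rw [detSub hρ hρ2]

theorem detCx {σ Ψ m Γ Γ₁} (h : ApCx σ Ψ m Γ Γ₁) :
    ∀ {Γ₂}, ApCx σ Ψ m Γ Γ₂ → Γ₁ = Γ₂ := by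
  intro Γ₂ h2
  cases h with
  | nil => cases h2; rfl
  | ty hΓ =>
    cases h2 with
    | ty hΓ2 => rw [detCx hΓ hΓ2]
  | tm hΓ hΦ hT =>
    cases h2 with
    | tm hΓ2 hΦ2 hT2 => rw [detCx hΓ hΓ2, detCx hΦ hΦ2, detTy hT hT2]
  | tyC hΓ hT =>
    cases h2 with
    | tyC hΓ2 hT2 => rw [detCx hΓ hΓ2, detTy hT hT2]
  | hash hΓ =>
    cases h2 with
    | hash hΓ2 => rw [detCx hΓ hΓ2]
end

theorem chopApCx (n : ℕ) {σ Ψ m} :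
    ∀ (Γ : Cx) {Γ'}, ApCx σ Ψ m Γ Γ' →
      ApCx σ Ψ m (Cx.chopGE n Γ) (Cx.chopGE n Γ')
  | .nil, _, h => by cases h; exact .nil
  | .snoc Γ d, _, h => by
    cases h with
    | ty hΓ =>
      simp only [Cx.chopGE, Dcl.lvl]; rename_i k; by_cases hk : k < n <;> simp only [hk, if_pos, if_neg, not_false_eq_true]
      · exact chopApCx n Γ hΓ
      · exact ApCx.ty hΓ
    | tm hΓ hΦ hT =>
      simp only [Cx.chopGE, Dcl.lvl]; rename_i k _ _ _ _ _; by_cases hk : k < n <;> simp only [hk, if_pos, if_neg, not_false_eq_true]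
      · exact chopApCx n Γ hΓ
      · exact ApCx.tm hΓ hΦ hT
    | tyC hΓ hT =>
      simp only [Cx.chopGE, Dcl.lvl]; rename_i k _ _ _ _ _; by_cases hk : k < n <;> simp only [hk, if_pos, if_neg, not_false_eq_true]
      · exact chopApCx n Γ hΓ
      · exact ApCx.tyC hΓ hT
    | hash hΓ =>
      simp only [Cx.chopGE, Dcl.lvl]; by_cases hk : 0 < n <;> simp only [hk, if_pos, if_neg, not_false_eq_true]
      · exact chopApCx n Γ hΓ
      · exact ApCx.hash hΓ

/-- Chopping–Substitution Commutativity: applying a type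
substitution `[(Φ̂ⁿ.T)/αⁿ]`, a term substitution `[(Φ̂ⁿ.e)/u]`, or a
simultaneous substitution `[σ/Φ̂]` to the lower-chop `Γ⌈n` of a context equals
the lower-chop at n of the result of applying the substitution to Γ. -/
theorem chop_subst_commute (n : ℕ) :
    -- type substitution [(Φ̂ⁿ.T)/αⁿ]
    (∀ (Φh : ECx) (T : Ty) (a : ℕ) (Γ Γ' Δ : Cx),
      ApCx1Ty Φh n T a Γ Γ' → ApCx1Ty Φh n T a (Cx.chopGE n Γ) Δ →
      Δ = Cx.chopGE n Γ') ∧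
    -- term substitution [(Φ̂ⁿ.e)/u]
    (∀ (Φh : ECx) (e : Tm) (u : ℕ) (Γ Γ' Δ : Cx),
      ApCx1Tm Φh n e u Γ Γ' → ApCx1Tm Φh n e u (Cx.chopGE n Γ) Δ →
      Δ = Cx.chopGE n Γ') ∧
    -- simultaneous substitution [σ/Φ̂ᵐ]
    (∀ (σ : MSub) (Φh : ECx) (m : ℕ) (Γ Γ' Δ : Cx),
      ApCx σ Φh m Γ Γ' → ApCx σ Φh m (Cx.chopGE n Γ) Δ →
      Δ = Cx.chopGE n Γ') := by
  refine ⟨fun _ _ _ Γ _ _ h1 h2 => detCx h2 (chopApCx n Γ h1),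
    fun _ _ _ Γ _ _ h1 h2 => detCx h2 (chopApCx n Γ h1),
    fun _ _ _ Γ _ _ h1 h2 => detCx h2 (chopApCx n Γ h1)⟩
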